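/- Let F = ℝ (or any archimedean local field), let V be a finite-dimensional real vector space with dim V = d ≥ 2 even, and let f be a Schwartz function on V ⊕ F². For ξ ∈ V with ξ ≠ 0, the integral ∫_{F× × K} |f(a⁻¹ξ, 0, a)| · |a|^{2 − d/2} d×a dk over F× × K (K the maximal compact of SL₂(F), f replaced by a K-average of Schwartz functions) converges absolutely whenever d > 4, and for every A ≥ 0 it is bounded by a constant (depending on f) times max(|ξ|,1)^{−A} · min(|ξ|,1)^{2 − d/2}. -/

import Mathlib

/-!
Along the curve `a ↦ (a⁻¹ • ξ, 0, a)` the point has norm `max (‖ξ‖ / |a|) |a|`, which is at least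
`‖ξ‖ / |a|` and at least `√‖ξ‖`. Schwartz decay of `f` therefore gives two bounds:
`‖f‖ ≲ (|a| / ‖ξ‖) ^ k` for any `k`, and `‖f‖ ≲ max ‖ξ‖ 1 ^ (-A)` uniformly in `a`. The integrand is
`‖f‖ |a| ^ (e - 1)` with `e = 2 - d/2 < 0`; the first bound (with `k` large) makes it integrable on
`|a| ≤ min ‖ξ‖ 1`, the second one beyond, and integrating the two power laws explicitly yields
`max ‖ξ‖ 1 ^ (-A) * min ‖ξ‖ 1 ^ e`. The probability measure on `K` only contributes its mass `1`.
-/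

open MeasureTheory Set Real
open scoped SchwartzMap

namespace SchwartzMap

variable {E F : Type*} [NormedAddCommGroup E] [NormedSpace ℝ E] [NormedAddCommGroup F]
  [NormedSpace ℝ F]

theorem exists_norm_le_mul_max_one_rpow_neg (f : 𝓢(E, F)) (k : ℝ) :
    ∃ C, 0 ≤ C ∧ ∀ x, ‖f x‖ ≤ C * max ‖x‖ 1 ^ (-k) := by
  obtain ⟨C, hC⟩ : ∃ C, ∀ x, (1 + ‖x‖) ^ ⌈k⌉₊ * ‖f x‖ ≤ C :=
    ⟨_, fun x => by
      simpa using one_add_le_sup_seminorm_apply (𝕜 := ℝ) (m := (⌈k⌉₊, 0)) le_rfl le_rfl f x⟩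
  refine ⟨C, (by positivity : (0:ℝ) ≤ _).trans (hC 0), fun x => ?_⟩
  have hX : 1 ≤ max ‖x‖ 1 := le_max_right _ _
  have hpow : max ‖x‖ 1 ^ k ≤ (1 + ‖x‖) ^ ⌈k⌉₊ := calc
    max ‖x‖ 1 ^ k ≤ max ‖x‖ 1 ^ (⌈k⌉₊ : ℝ) := rpow_le_rpow_of_exponent_le hX (Nat.le_ceil k)
    _ ≤ (1 + ‖x‖) ^ (⌈k⌉₊ : ℝ) := by
      gcongr
      exact max_le (by linarith) (by linarith [norm_nonneg x])
    _ = (1 + ‖x‖) ^ ⌈k⌉₊ := rpow_natCast _ _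
  rw [rpow_neg (by positivity), ← div_eq_mul_inv, le_div_iff₀' (by positivity)]
  exact (mul_le_mul_of_nonneg_right hpow (norm_nonneg _)).trans (hC x)

end SchwartzMap

theorem integrableOn_Ioi_zero_and_setIntegral_le_of_le_rpow {g : ℝ → ℝ} {s p q c₁ c₂ : ℝ}
    (hs : 0 < s) (hp : -1 < p) (hq : q < -1) (hg : AEStronglyMeasurable g (volume.restrict (Ioi 0)))
    (hg0 : ∀ t, 0 < t → 0 ≤ g t) (h_small : ∀ t, 0 < t → t ≤ s → g t ≤ c₁ * t ^ p)
    (h_large : ∀ t, s < t → g t ≤ c₂ * t ^ q) :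
    IntegrableOn g (Ioi 0) ∧
      ∫ t in Ioi 0, g t ≤ c₁ * (s ^ (p + 1) / (p + 1)) - c₂ * (s ^ (q + 1) / (q + 1)) := by
  have hI₁ : IntegrableOn (fun t => c₁ * t ^ p) (Ioc 0 s) :=
    (intervalIntegral.intervalIntegrable_rpow' hp).1.const_mul c₁
  have hI₂ : IntegrableOn (fun t => c₂ * t ^ q) (Ioi s) :=
    (integrableOn_Ioi_rpow_of_lt hq hs).const_mul c₂
  have hg₁ : IntegrableOn g (Ioc 0 s) :=
    hI₁.mono' (hg.mono_set Ioc_subset_Ioi_self) <| ae_restrict_of_forall_mem measurableSet_Ioc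
      fun t ht => by rw [norm_of_nonneg (hg0 t ht.1)]; exact h_small t ht.1 ht.2
  have hg₂ : IntegrableOn g (Ioi s) :=
    hI₂.mono' (hg.mono_set (Ioi_subset_Ioi hs.le)) <| ae_restrict_of_forall_mem measurableSet_Ioi
      fun t ht => by rw [norm_of_nonneg (hg0 t (hs.trans ht))]; exact h_large t ht
  rw [← Ioc_union_Ioi_eq_Ioi hs.le]
  refine ⟨hg₁.union hg₂, ?_⟩
  rw [setIntegral_union Ioc_disjoint_Ioi_same measurableSet_Ioi hg₁ hg₂]
  have hJ₁ : ∫ t in Ioc 0 s, c₁ * t ^ p = c₁ * (s ^ (p + 1) / (p + 1)) := by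
    rw [integral_const_mul, ← intervalIntegral.integral_of_le hs.le, integral_rpow (Or.inl hp),
      zero_rpow (by linarith), sub_zero]
  have hJ₂ : ∫ t in Ioi s, c₂ * t ^ q = -(c₂ * (s ^ (q + 1) / (q + 1))) := by
    rw [integral_const_mul, integral_Ioi_rpow_of_lt hq hs]
    ring
  rw [sub_eq_add_neg, ← hJ₁, ← hJ₂]
  exact add_le_add (setIntegral_mono_on hg₁ hI₁ measurableSet_Ioc fun t ht => h_small t ht.1 ht.2)
    (setIntegral_mono_on hg₂ hI₂ measurableSet_Ioi h_large)

theorem integrable_and_integral_le_of_abs_le_rpow {g : ℝ → ℝ} {s p q c₁ c₂ : ℝ}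
    (hs : 0 < s) (hp : -1 < p) (hq : q < -1) (hg : AEStronglyMeasurable g)
    (hg0 : ∀ a, 0 ≤ g a) (h_small : ∀ a, a ≠ 0 → |a| ≤ s → g a ≤ c₁ * |a| ^ p)
    (h_large : ∀ a, s < |a| → g a ≤ c₂ * |a| ^ q) :
    Integrable g ∧
      ∫ a, g a ≤ 2 * (c₁ * (s ^ (p + 1) / (p + 1)) - c₂ * (s ^ (q + 1) / (q + 1))) := by
  obtain ⟨hpos, hpos_le⟩ := integrableOn_Ioi_zero_and_setIntegral_le_of_le_rpow hs hp hq
    hg.restrict (fun t _ => hg0 t)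
    (fun t ht hts => by simpa [abs_of_pos ht] using h_small t ht.ne' (by rwa [abs_of_pos ht]))
    (fun t hst => by
      simpa [abs_of_pos (hs.trans hst)] using h_large t (by rwa [abs_of_pos (hs.trans hst)]))
  obtain ⟨hneg, hneg_le⟩ :=
    integrableOn_Ioi_zero_and_setIntegral_le_of_le_rpow (g := fun t => g (-t)) hs hp hq
    (hg.comp_quasiMeasurePreserving
      (Measure.measurePreserving_neg volume).quasiMeasurePreserving).restrict (fun t _ => hg0 _)
    (fun t ht hts => by
      simpa [abs_of_pos ht] using h_small (-t) (neg_ne_zero.2 ht.ne') (by simpa [abs_of_pos ht]))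
    (fun t hst => by
      simpa [abs_of_pos (hs.trans hst)] using h_large (-t) (by simpa [abs_of_pos (hs.trans hst)]))
  have hIic : IntegrableOn g (Iic 0) := by
    have h : IntegrableOn (fun t => g (- -t)) (Iio 0) :=
      IntegrableOn.comp_neg_Iio (f := fun t => g (-t)) (c := 0) (by rwa [neg_zero])
    simp only [neg_neg] at h
    exact (integrableOn_Iic_iff_integrableOn_Iio enorm_ne_top).2 h
  have hsplit : ∫ a, g a = (∫ a in Ioi 0, g (-a)) + ∫ a in Ioi 0, g a := by
    rw [integral_comp_neg_Ioi, neg_zero, ← setIntegral_union (Iic_disjoint_Ioi le_rfl)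
      measurableSet_Ioi hIic hpos, Iic_union_Ioi, setIntegral_univ]
  refine ⟨integrableOn_univ.1 (Iic_union_Ioi (a := (0:ℝ)) ▸ hIic.union hpos), ?_⟩
  rw [hsplit]
  linarith

section Torus

variable {V F : Type*} [NormedAddCommGroup V] [NormedSpace ℝ V] [NormedAddCommGroup F]
  [NormedSpace ℝ F]

noncomputable def torusIntegrand (f : 𝓢(V × ℝ × ℝ, F)) (ξ : V) (e a : ℝ) : ℝ :=
  ‖f (a⁻¹ • ξ, 0, a)‖ * |a| ^ e * |a|⁻¹

variable (f : 𝓢(V × ℝ × ℝ, F)) (ξ : V) (e : ℝ)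

theorem torusIntegrand_nonneg (a : ℝ) : 0 ≤ torusIntegrand f ξ e a := by
  unfold torusIntegrand
  positivity

theorem aestronglyMeasurable_torusIntegrand : AEStronglyMeasurable (torusIntegrand f ξ e) := by
  have hcont : ContinuousOn (torusIntegrand f ξ e) {0}ᶜ := by
    unfold torusIntegrand
    refine ((f.continuous.comp_continuousOn ?_).norm.mul ?_).mul ?_
    · exact (continuousOn_inv₀.smul continuousOn_const).prodMk
        (continuousOn_const.prodMk continuousOn_id)
    · exact continuous_abs.continuousOn.rpow_const fun a ha => Or.inl (abs_ne_zero.2 ha)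
    · exact continuous_abs.continuousOn.inv₀ fun a ha => abs_ne_zero.2 ha
  have h := hcont.aestronglyMeasurable (μ := volume) (measurableSet_singleton (0:ℝ)).compl
  rwa [restrict_compl_singleton] at h

theorem torusIntegrand_eq {a : ℝ} (ha : a ≠ 0) :
    torusIntegrand f ξ e a = ‖f (a⁻¹ • ξ, 0, a)‖ * |a| ^ (e - 1) := by
  rw [torusIntegrand, rpow_sub_one (abs_ne_zero.2 ha), div_eq_mul_inv, mul_assoc]

theorem norm_div_abs_le_norm_inv_smul (a : ℝ) : ‖ξ‖ / |a| ≤ ‖(a⁻¹ • ξ, (0:ℝ), a)‖ := by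
  rw [div_eq_inv_mul, ← Real.norm_eq_abs, ← norm_inv a, ← norm_smul]
  exact norm_fst_le (a⁻¹ • ξ, (0:ℝ), a)

theorem max_norm_one_le_sq {a : ℝ} (ha : a ≠ 0) :
    max ‖ξ‖ 1 ≤ max ‖(a⁻¹ • ξ, (0:ℝ), a)‖ 1 ^ 2 := by
  set X := max ‖(a⁻¹ • ξ, (0:ℝ), a)‖ 1
  have hX : 1 ≤ X := le_max_right _ _
  have hnorm : ‖ξ‖ ≤ X * X := calc
    ‖ξ‖ = ‖ξ‖ / |a| * |a| := (div_mul_cancel₀ _ (abs_ne_zero.2 ha)).symm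
    _ ≤ X * X := by
      gcongr
      · exact (norm_div_abs_le_norm_inv_smul ξ a).trans (le_max_left _ _)
      · exact ((norm_snd_le ((0:ℝ), a)).trans (norm_snd_le (a⁻¹ • ξ, (0:ℝ), a))).trans
          (le_max_left _ _)
  rw [sq]
  exact max_le hnorm (by nlinarith)

theorem exists_torusIntegrand_le_abs_rpow (hξ : ξ ≠ 0) {k : ℝ} (hk : 0 ≤ k) :
    ∃ C, 0 ≤ C ∧ ∀ a, a ≠ 0 → torusIntegrand f ξ e a ≤ C * ‖ξ‖ ^ (-k) * |a| ^ (k + e - 1) := by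
  obtain ⟨C, hC0, hC⟩ := f.exists_norm_le_mul_max_one_rpow_neg k
  refine ⟨C, hC0, fun a ha => ?_⟩
  have hr : 0 < ‖ξ‖ := norm_pos_iff.2 hξ
  have ha' : 0 < |a| := abs_pos.2 ha
  have hfa : ‖f (a⁻¹ • ξ, 0, a)‖ ≤ C * (‖ξ‖ ^ (-k) * |a| ^ k) := calc
    ‖f (a⁻¹ • ξ, 0, a)‖ ≤ C * max ‖(a⁻¹ • ξ, (0:ℝ), a)‖ 1 ^ (-k) := hC _
    _ ≤ C * (‖ξ‖ / |a|) ^ (-k) := by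
      refine mul_le_mul_of_nonneg_left (rpow_le_rpow_of_nonpos (div_pos hr ha') ?_ (by linarith))
        hC0
      exact (norm_div_abs_le_norm_inv_smul ξ a).trans (le_max_left _ _)
    _ = C * (‖ξ‖ ^ (-k) * |a| ^ k) := by
      rw [div_rpow hr.le ha'.le, rpow_neg ha'.le, div_inv_eq_mul]
  rw [torusIntegrand_eq f ξ e ha, show k + e - 1 = k + (e - 1) by ring, rpow_add ha']
  calc ‖f (a⁻¹ • ξ, 0, a)‖ * |a| ^ (e - 1) ≤ C * (‖ξ‖ ^ (-k) * |a| ^ k) * |a| ^ (e - 1) := by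
        gcongr
    _ = _ := by ring

theorem exists_torusIntegrand_le_max_norm_one_rpow_neg {A : ℝ} (hA : 0 ≤ A) :
    ∃ C, ∀ a, a ≠ 0 → torusIntegrand f ξ e a ≤ C * max ‖ξ‖ 1 ^ (-A) * |a| ^ (e - 1) := by
  obtain ⟨C, hC0, hC⟩ := f.exists_norm_le_mul_max_one_rpow_neg (2 * A)
  refine ⟨C, fun a ha => ?_⟩
  have hfa : ‖f (a⁻¹ • ξ, 0, a)‖ ≤ C * max ‖ξ‖ 1 ^ (-A) := calc
    ‖f (a⁻¹ • ξ, 0, a)‖ ≤ C * max ‖(a⁻¹ • ξ, (0:ℝ), a)‖ 1 ^ (-(2 * A)) := hC _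
    _ = C * (max ‖(a⁻¹ • ξ, (0:ℝ), a)‖ 1 ^ 2) ^ (-A) := by
      rw [← rpow_natCast, ← rpow_mul (by positivity)]
      norm_num
    _ ≤ C * max ‖ξ‖ 1 ^ (-A) := by
      refine mul_le_mul_of_nonneg_left (rpow_le_rpow_of_nonpos ?_ (max_norm_one_le_sq ξ ha)
        (by linarith)) hC0
      positivity
  rw [torusIntegrand_eq f ξ e ha]
  gcongr

end Torus

theorem integrable_torusIntegrand_and_integral_le {V F : Type*} [NormedAddCommGroup V]
    [NormedSpace ℝ V] [NormedAddCommGroup F] [NormedSpace ℝ F] (f : 𝓢(V × ℝ × ℝ, F)) {ξ : V}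
    (hξ : ξ ≠ 0) {e A : ℝ} (he : e < 0) (hA : 0 ≤ A) :
    Integrable (torusIntegrand f ξ e) ∧
      ∃ C, ∫ a, torusIntegrand f ξ e a ≤ C * max ‖ξ‖ 1 ^ (-A) * min ‖ξ‖ 1 ^ e := by
  set s := min ‖ξ‖ 1
  set M := max ‖ξ‖ 1
  have hs : 0 < s := lt_min (norm_pos_iff.2 hξ) one_pos
  have hM : 1 ≤ M := le_max_right _ _
  set k := A + 1 - e
  obtain ⟨C₁, hC₁, h_small⟩ := exists_torusIntegrand_le_abs_rpow f ξ e hξ (k := k) (by linarith)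
  obtain ⟨C₂, h_large⟩ := exists_torusIntegrand_le_max_norm_one_rpow_neg f ξ e hA
  rw [show k + e - 1 = A by ring] at h_small
  obtain ⟨hint, hle⟩ := integrable_and_integral_le_of_abs_le_rpow (p := A) (q := e - 1) hs
    (by linarith) (by linarith) (aestronglyMeasurable_torusIntegrand f ξ e)
    (torusIntegrand_nonneg f ξ e) (fun a ha _ => h_small a ha)
    (fun a ha => h_large a (abs_pos.1 (hs.trans ha)))
  refine ⟨hint, 2 * (C₁ / (A + 1) - C₂ / e), hle.trans ?_⟩
  have hdecay : ‖ξ‖ ^ (-k) * s ^ (A + 1) ≤ M ^ (-A) * s ^ e := by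
    have hsM : ‖ξ‖ = s * M := by rw [min_mul_max, mul_one]
    have hsplit : ‖ξ‖ ^ (-k) * s ^ (A + 1) = M ^ (-k) * s ^ e := by
      rw [hsM, mul_rpow hs.le (by positivity), show A + 1 = k + e by ring, rpow_add hs,
        rpow_neg hs.le]
      field_simp
    rw [hsplit]
    exact mul_le_mul_of_nonneg_right (rpow_le_rpow_of_exponent_le hM (by linarith)) (by positivity)
  calc 2 * (C₁ * ‖ξ‖ ^ (-k) * (s ^ (A + 1) / (A + 1))
          - C₂ * M ^ (-A) * (s ^ (e - 1 + 1) / (e - 1 + 1)))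
      = 2 * (C₁ / (A + 1) * (‖ξ‖ ^ (-k) * s ^ (A + 1)) - C₂ / e * (M ^ (-A) * s ^ e)) := by
        rw [sub_add_cancel]
        ring
    _ ≤ 2 * (C₁ / (A + 1) * (M ^ (-A) * s ^ e) - C₂ / e * (M ^ (-A) * s ^ e)) := by
        gcongr
    _ = 2 * (C₁ / (A + 1) - C₂ / e) * M ^ (-A) * s ^ e := by ring

theorem stmt4_general
    {V : Type*} [NormedAddCommGroup V] [NormedSpace ℝ V]
    (d : ℕ) (h4 : 4 < d)
    {K : Type*} [MeasurableSpace K] (ν : Measure K) [IsProbabilityMeasure ν]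
    (f : SchwartzMap (V × ℝ × ℝ) ℂ) (ξ : V) (hξ : ξ ≠ 0) :
    IntegrableOn
      (fun q : ℝ × K => ‖f (q.1⁻¹ • ξ, 0, q.1)‖ * |q.1| ^ ((2:ℝ) - (d:ℝ)/2) * |q.1|⁻¹)
      (({0}ᶜ : Set ℝ) ×ˢ (Set.univ : Set K)) (volume.prod ν)
    ∧ ∀ A : ℝ, 0 ≤ A → ∃ C : ℝ,
      (∫ q in (({0}ᶜ : Set ℝ) ×ˢ (Set.univ : Set K)),
          ‖f (q.1⁻¹ • ξ, 0, q.1)‖ * |q.1| ^ ((2:ℝ) - (d:ℝ)/2) * |q.1|⁻¹ ∂(volume.prod ν))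
        ≤ C * max ‖ξ‖ 1 ^ (-A) * min ‖ξ‖ 1 ^ ((2:ℝ) - (d:ℝ)/2) := by
  have he : (2:ℝ) - d / 2 < 0 := by
    have : (4:ℝ) < d := by exact_mod_cast h4
    linarith
  have hbound (A : ℝ) (hA : 0 ≤ A) := integrable_torusIntegrand_and_integral_le f hξ he hA
  have hres : (volume.prod ν).restrict (({0}ᶜ : Set ℝ) ×ˢ (univ : Set K)) = volume.prod ν := by
    rw [← Measure.prod_restrict, Measure.restrict_univ, restrict_compl_singleton]
  refine ⟨?_, fun A hA => ?_⟩
  · rw [IntegrableOn, hres]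
    exact (hbound 0 le_rfl).1.comp_fst ν
  · obtain ⟨C, hC⟩ := (hbound A hA).2
    refine ⟨C, ?_⟩
    rw [hres]
    calc _ = ∫ a, torusIntegrand f ξ (2 - d / 2) a :=
          (integral_fun_fst (torusIntegrand f ξ _)).trans (by simp)
      _ ≤ _ := hC

/-- Let `F = ℝ`, let `V` be a finite-dimensional real vector space of even
dimension `d > 4`, and let `f` be a Schwartz function on `V ⊕ F²`.  For `ξ ∈ V`, `ξ ≠ 0`, the
integral `∫_{F× × K} |f(a⁻¹ξ, 0, a)| |a|^{2−d/2} d×a dk` (with `d×a = |a|⁻¹ da` and `K` a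
compact group with probability Haar measure) converges absolutely, and for every `A ≥ 0` it is
bounded by a constant depending on `f` (and `A`) times
`max(|ξ|,1)^{−A} · min(|ξ|,1)^{2−d/2}`. -/
theorem stmt4
    {V : Type*} [NormedAddCommGroup V] [NormedSpace ℝ V] [FiniteDimensional ℝ V]
    (d : ℕ) (hd : Even d) (hdim : Module.finrank ℝ V = d) (h4 : 4 < d)
    {K : Type*} [MeasurableSpace K] (ν : Measure K) [IsProbabilityMeasure ν]
    (f : SchwartzMap (V × ℝ × ℝ) ℂ) (ξ : V) (hξ : ξ ≠ 0) :
    IntegrableOn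
      (fun q : ℝ × K => ‖f (q.1⁻¹ • ξ, 0, q.1)‖ * |q.1| ^ ((2:ℝ) - (d:ℝ)/2) * |q.1|⁻¹)
      (({0}ᶜ : Set ℝ) ×ˢ (Set.univ : Set K)) (volume.prod ν)
    ∧ ∀ A : ℝ, 0 ≤ A → ∃ C : ℝ,
      (∫ q in (({0}ᶜ : Set ℝ) ×ˢ (Set.univ : Set K)),
          ‖f (q.1⁻¹ • ξ, 0, q.1)‖ * |q.1| ^ ((2:ℝ) - (d:ℝ)/2) * |q.1|⁻¹ ∂(volume.prod ν))
        ≤ C * max ‖ξ‖ 1 ^ (-A) * min ‖ξ‖ 1 ^ ((2:ℝ) - (d:ℝ)/2) :=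
  stmt4_general d h4 ν f ξ hξ
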